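/- Let A ⊆ B be positive affine semigroups in ℕ^m with C(A) = C(B), and let g be a coset of G(A) in G(B) with B ∩ g ≠ ∅. Then there exists a shift h ∈ G(B) such that b − h ∈ A for every b ∈ B ∩ g; consequently the set (B ∩ g) − h is contained in A and satisfies ((B ∩ g) − h) + A ⊆ (B ∩ g) − h, i.e., it is the exponent set of a monomial ideal of K[A]. -/

import Mathlib

open scoped BigOperators

/-- The coordinatewise cast `ℕ^m → ℤ^m`. -/
def ntz {m : ℕ} (x : Fin m → ℕ) : Fin m → ℤ := fun i => (x i : ℤ)

/-- The coordinatewise cast `ℕ^m → ℚ^m`. -/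
def ntq {m : ℕ} (x : Fin m → ℕ) : Fin m → ℚ := fun i => (x i : ℚ)

/-- `G(S)`: the subgroup of `ℤ^m` generated by an affine semigroup `S ⊆ ℕ^m`. -/
def grp {m : ℕ} (S : AddSubmonoid (Fin m → ℕ)) : AddSubgroup (Fin m → ℤ) :=
  AddSubgroup.closure (ntz '' (S : Set (Fin m → ℕ)))

/-- `C(S)`: the cone in `ℚ^m` generated by `S`, i.e. all nonnegative rational
linear combinations of elements of `S`. -/
def cone {m : ℕ} (S : AddSubmonoid (Fin m → ℕ)) : Set (Fin m → ℚ) :=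
  {x | ∃ (n : ℕ) (c : Fin n → ℚ) (v : Fin n → Fin m → ℕ),
    (∀ i, 0 ≤ c i) ∧ (∀ i, v i ∈ S) ∧ x = ∑ i, c i • ntq (v i)}

/-- `B_A := {x ∈ B : x ∉ B + (A \ {0})}`. -/
def BA {m : ℕ} (A B : AddSubmonoid (Fin m → ℕ)) : Set (Fin m → ℕ) :=
  {x | x ∈ B ∧ ¬ ∃ b ∈ B, ∃ a ∈ A, a ≠ 0 ∧ x = b + a}

/-! Since `C(A) = C(B)`, every generator of `B` has a positive multiple in `A`, so `B = A + F` for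
the finite set `F` of combinations of the generators with bounded coefficients. The finitely many
differences `f - b₀` (`f ∈ F`) lying in `G(A)` are differences `p_f - q_f` of elements of `A`;
with `k = ∑ q_f`, the shift `h = b₀ - k` sends every `b = a + f` of the coset of `b₀` into `A`. -/

section Monoid

variable {M : Type*} [AddCommMonoid M]

theorem AddSubmonoid.exists_finite_add_of_nsmul_mem (A : AddSubmonoid M) (s : Finset M)
    (hs : ∀ x ∈ s, ∃ N : ℕ, 0 < N ∧ N • x ∈ A) :
    ∃ F : Set M, F.Finite ∧
      ∀ b ∈ AddSubmonoid.closure (s : Set M), ∃ a ∈ A, ∃ f ∈ F, b = a + f := by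
  choose N hN hNA using hs
  refine ⟨Set.range fun r : (i : s) → Fin (N i i.2) => ∑ i, (r i : ℕ) • (i : M),
    Set.finite_range _, fun b hb => ?_⟩
  obtain ⟨c, rfl⟩ := AddSubmonoid.mem_closure_finset'.mp hb
  refine ⟨∑ i : s, (c i / N i i.2) • (N i i.2 • (i : M)),
    A.sum_mem fun i _ => A.nsmul_mem (hNA i i.2) _, _,
    ⟨fun i => ⟨c i % N i i.2, Nat.mod_lt _ (hN i i.2)⟩, rfl⟩, ?_⟩
  rw [← Finset.sum_add_distrib]
  refine Finset.sum_congr rfl fun i _ => ?_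
  rw [smul_smul, ← add_smul, Nat.div_add_mod']

end Monoid

section CommGroup

variable {G : Type*} [AddCommGroup G] (P : AddSubmonoid G)

theorem AddSubmonoid.exists_sub_of_mem_closure {x : G}
    (hx : x ∈ AddSubgroup.closure (P : Set G)) : ∃ p ∈ P, ∃ q ∈ P, x = p - q := by
  induction hx using AddSubgroup.closure_induction with
  | mem x hx => exact ⟨x, hx, 0, P.zero_mem, (sub_zero x).symm⟩
  | zero => exact ⟨0, P.zero_mem, 0, P.zero_mem, (sub_zero 0).symm⟩
  | add x y _ _ hx hy =>
    obtain ⟨p, hp, q, hq, rfl⟩ := hx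
    obtain ⟨p', hp', q', hq', rfl⟩ := hy
    exact ⟨p + p', add_mem hp hp', q + q', add_mem hq hq', by abel⟩
  | neg x _ hx =>
    obtain ⟨p, hp, q, hq, rfl⟩ := hx
    exact ⟨q, hq, p, hp, neg_sub p q⟩

theorem AddSubmonoid.exists_add_mem_of_finite_subset_closure {T : Set G} (hT : T.Finite)
    (hTP : T ⊆ AddSubgroup.closure (P : Set G)) : ∃ k ∈ P, ∀ t ∈ T, t + k ∈ P := by
  induction T, hT using Set.Finite.induction_on with
  | empty => exact ⟨0, P.zero_mem, by simp⟩
  | @insert t T _ _ ih =>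
    obtain ⟨k, hk, hTk⟩ := ih (subset_trans (Set.subset_insert t T) hTP)
    obtain ⟨p, hp, q, hq, rfl⟩ := P.exists_sub_of_mem_closure (hTP (Set.mem_insert _ _))
    refine ⟨k + q, add_mem hk hq, ?_⟩
    rintro t (rfl | ht)
    · simpa using add_mem hp hk
    · simpa [← add_assoc] using add_mem (hTk t ht) hq

end CommGroup

section Casts

variable {m : ℕ}

lemma ntz_add (x y : Fin m → ℕ) : ntz (x + y) = ntz x + ntz y := by
  funext i; simp [ntz]

def ntzHom : (Fin m → ℕ) →+ (Fin m → ℤ) where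
  toFun := ntz
  map_zero' := by funext i; simp [ntz]
  map_add' := ntz_add

@[simp]
lemma ntzHom_apply (x : Fin m → ℕ) : ntzHom x = ntz x := rfl

lemma ntq_add (x y : Fin m → ℕ) : ntq (x + y) = ntq x + ntq y := by
  funext i; simp [ntq]

lemma ntq_nsmul (n : ℕ) (x : Fin m → ℕ) : ntq (n • x) = n • ntq x := by
  funext i; simp [ntq]

lemma ntq_injective : Function.Injective (ntq (m := m)) := fun x y h =>
  funext fun i => by simpa [ntq] using congrFun h i

end Casts

section AffineSemigroup

variable {m : ℕ}

lemma ntz_mem_grp {S : AddSubmonoid (Fin m → ℕ)} {a : Fin m → ℕ} (ha : a ∈ S) : ntz a ∈ grp S :=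
  AddSubgroup.subset_closure ⟨a, ha, rfl⟩

lemma grp_eq_closure_map (S : AddSubmonoid (Fin m → ℕ)) :
    grp S = AddSubgroup.closure (S.map ntzHom : Set (Fin m → ℤ)) := rfl

lemma ntq_mem_cone {S : AddSubmonoid (Fin m → ℕ)} {x : Fin m → ℕ} (hx : x ∈ S) :
    ntq x ∈ cone S :=
  ⟨1, fun _ => 1, fun _ => x, fun _ => zero_le_one, fun _ => hx, by simp⟩

def ratSaturation (S : AddSubmonoid (Fin m → ℕ)) : AddSubmonoid (Fin m → ℚ) where
  carrier := {y | ∃ N : ℕ, 0 < N ∧ ∃ s ∈ S, N • y = ntq s}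
  zero_mem' := ⟨1, one_pos, 0, S.zero_mem, by funext i; simp [ntq]⟩
  add_mem' := by
    rintro y y' ⟨N, hN, s, hs, hy⟩ ⟨N', hN', s', hs', hy'⟩
    refine ⟨N * N', Nat.mul_pos hN hN', N' • s + N • s', add_mem (S.nsmul_mem hs _)
      (S.nsmul_mem hs' _), ?_⟩
    rw [ntq_add, ntq_nsmul, ntq_nsmul, ← hy, ← hy', smul_add, smul_smul, smul_smul, mul_comm N']

lemma smul_ntq_mem_ratSaturation {S : AddSubmonoid (Fin m → ℕ)} {c : ℚ} (hc : 0 ≤ c)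
    {v : Fin m → ℕ} (hv : v ∈ S) : c • ntq v ∈ ratSaturation S := by
  refine ⟨c.den, c.den_pos, c.num.toNat • v, S.nsmul_mem hv _, ?_⟩
  have hnum : ((c.num.toNat : ℕ) : ℚ) = c.num := by
    exact_mod_cast Int.toNat_of_nonneg (Rat.num_nonneg.mpr hc)
  rw [ntq_nsmul, ← Nat.cast_smul_eq_nsmul ℚ, ← Nat.cast_smul_eq_nsmul ℚ, smul_smul,
    Rat.den_mul_eq_num, hnum]

lemma cone_subset_ratSaturation (S : AddSubmonoid (Fin m → ℕ)) :
    cone S ⊆ ratSaturation S := by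
  rintro x ⟨n, c, v, hc, hv, rfl⟩
  exact sum_mem fun i _ => smul_ntq_mem_ratSaturation (hc i) (hv i)

lemma exists_nsmul_mem_of_ntq_mem_cone {S : AddSubmonoid (Fin m → ℕ)} {x : Fin m → ℕ}
    (hx : ntq x ∈ cone S) : ∃ N : ℕ, 0 < N ∧ N • x ∈ S := by
  obtain ⟨N, hN, s, hs, hNx⟩ := cone_subset_ratSaturation S hx
  exact ⟨N, hN, ntq_injective ((ntq_nsmul N x).trans hNx) ▸ hs⟩

lemma add_ntz_mem_coset_sub {A B : AddSubmonoid (Fin m → ℕ)} (hAB : A ≤ B)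
    {g : (Fin m → ℤ) ⧸ grp A} {h : Fin m → ℤ} {x : Fin m → ℤ}
    (hx : x ∈ {y | ∃ b ∈ B, (QuotientAddGroup.mk (ntz b) : (Fin m → ℤ) ⧸ grp A) = g ∧
      y = ntz b - h})
    {a : Fin m → ℕ} (ha : a ∈ A) :
    x + ntz a ∈ {y | ∃ b ∈ B, (QuotientAddGroup.mk (ntz b) : (Fin m → ℤ) ⧸ grp A) = g ∧
      y = ntz b - h} := by
  obtain ⟨b, hb, rfl, rfl⟩ := hx
  refine ⟨b + a, add_mem hb (hAB ha), ?_, by rw [ntz_add]; abel⟩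
  rw [ntz_add, QuotientAddGroup.mk_add, (QuotientAddGroup.eq_zero_iff _).mpr (ntz_mem_grp ha),
    add_zero]

end AffineSemigroup

theorem stmt3_general {m : ℕ} (A B : AddSubmonoid (Fin m → ℕ)) (hBfg : B.FG)
    (hAB : A ≤ B) (hcone : cone A = cone B)
    (g : (Fin m → ℤ) ⧸ grp A)
    (hg : ∃ b ∈ B, (QuotientAddGroup.mk (ntz b) : (Fin m → ℤ) ⧸ grp A) = g) :
    ∃ h ∈ grp B,
      (∀ b ∈ B, (QuotientAddGroup.mk (ntz b) : (Fin m → ℤ) ⧸ grp A) = g →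
        ∃ a ∈ A, ntz b - h = ntz a) ∧
      (∀ x ∈ {y : Fin m → ℤ | ∃ b ∈ B,
          (QuotientAddGroup.mk (ntz b) : (Fin m → ℤ) ⧸ grp A) = g ∧ y = ntz b - h},
        ∀ a ∈ A, x + ntz a ∈ {y : Fin m → ℤ | ∃ b ∈ B,
          (QuotientAddGroup.mk (ntz b) : (Fin m → ℤ) ⧸ grp A) = g ∧ y = ntz b - h}) := by
  obtain ⟨b₀, hb₀, rfl⟩ := hg
  obtain ⟨s, rfl⟩ := hBfg
  obtain ⟨F, hF, hsplit⟩ := A.exists_finite_add_of_nsmul_mem s fun x hx =>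
    exists_nsmul_mem_of_ntq_mem_cone (hcone ▸ ntq_mem_cone (AddSubmonoid.subset_closure hx))
  have hT : {t ∈ grp A | ∃ f ∈ F, t = ntz f - ntz b₀}.Finite :=
    (hF.image fun f => ntz f - ntz b₀).subset fun t ⟨_, f, hf, ht⟩ => ⟨f, hf, ht.symm⟩
  obtain ⟨_, ⟨k, hk, rfl⟩, hshift⟩ := (A.map ntzHom).exists_add_mem_of_finite_subset_closure hT
    fun t ht => (grp_eq_closure_map A).le ht.1
  refine ⟨ntz b₀ - ntz k, sub_mem (ntz_mem_grp hb₀) (ntz_mem_grp (hAB hk)),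
    fun b hb hbg => ?_, fun x hx a ha => add_ntz_mem_coset_sub hAB hx ha⟩
  obtain ⟨a, ha, f, hf, rfl⟩ := hsplit b hb
  have hf₀ : ntz f - ntz b₀ ∈ grp A := by
    have hab := sub_mem (QuotientAddGroup.eq_iff_sub_mem.mp hbg) (ntz_mem_grp ha)
    rwa [ntz_add, add_sub_assoc, add_sub_cancel_left] at hab
  obtain ⟨a', ha', hfa'⟩ := hshift _ ⟨hf₀, f, hf, rfl⟩
  refine ⟨a + a', add_mem ha ha', ?_⟩
  rw [ntzHom_apply, ntzHom_apply] at hfa'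
  rw [ntz_add, ntz_add, hfa']
  abel

/-- Let `A ⊆ B` be positive affine semigroups in `ℕ^m` with `C(A) = C(B)`,
and let `g` be a coset of `G(A)` in `G(B)` with `B ∩ g ≠ ∅`.  Then there is a shift
`h ∈ G(B)` with `b − h ∈ A` for every `b ∈ B ∩ g`; consequently `(B ∩ g) − h ⊆ A` and
`((B ∩ g) − h) + A ⊆ (B ∩ g) − h`, i.e. it is the exponent set of a monomial ideal
of `K[A]`. -/
theorem stmt3 {m : ℕ} (A B : AddSubmonoid (Fin m → ℕ)) (hAfg : A.FG) (hBfg : B.FG)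
    (hAB : A ≤ B) (hcone : cone A = cone B)
    (g : (Fin m → ℤ) ⧸ grp A)
    (hg : ∃ b ∈ B, (QuotientAddGroup.mk (ntz b) : (Fin m → ℤ) ⧸ grp A) = g) :
    ∃ h ∈ grp B,
      (∀ b ∈ B, (QuotientAddGroup.mk (ntz b) : (Fin m → ℤ) ⧸ grp A) = g →
        ∃ a ∈ A, ntz b - h = ntz a) ∧
      (∀ x ∈ {y : Fin m → ℤ | ∃ b ∈ B,
          (QuotientAddGroup.mk (ntz b) : (Fin m → ℤ) ⧸ grp A) = g ∧ y = ntz b - h},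
        ∀ a ∈ A, x + ntz a ∈ {y : Fin m → ℤ | ∃ b ∈ B,
          (QuotientAddGroup.mk (ntz b) : (Fin m → ℤ) ⧸ grp A) = g ∧ y = ntz b - h}) :=
  stmt3_general A B hBfg hAB hcone g hg
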